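/- arXiv:1208.1322 — 4 statements merged into one kernel-verified Lean document; each statement's English description precedes it below -/
import Mathlib

section
/- If a symmetric endomorphism A of an n-dimensional inner product space (n ≥ 2) has S₂(A) > 0 and S₁(A) > 0, then the Newton tensor P₁ = S₁·Id − A is positive definite. -/
/-!
Since `S₁² = ∑ κᵢ² + 2 S₂ > κᵢ²` and `S₁ > 0`, every eigenvalue satisfies `κᵢ < S₁`. The
eigenvalues of `S₁ • 1 - A` are the `S₁ - κᵢ` (conjugate by the unitary diagonalising `A`),
so it is positive definite.
-/

open Finset

theorem Finset.sq_sum_eq_sum_sq_add_two_mul_sum_lt {ι R : Type*} [Fintype ι] [LinearOrder ι]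
    [CommSemiring R] (f : ι → R) :
    (∑ i, f i) ^ 2 = ∑ i, f i ^ 2 + 2 * ∑ p : ι × ι with p.1 < p.2, f p.1 * f p.2 := by
  have hsplit : ∀ p : ι × ι, f p.1 * f p.2 = (if p.1 = p.2 then f p.1 * f p.2 else 0) +
      (if p.1 < p.2 then f p.1 * f p.2 else 0) + (if p.2 < p.1 then f p.1 * f p.2 else 0) := by
    intro p
    rcases lt_trichotomy p.1 p.2 with h | h | h
    · simp [h, h.ne, h.not_gt]
    · simp [h]
    · simp [h, h.ne', h.not_gt]
  have hdiag : ∑ p : ι × ι with p.1 = p.2, f p.1 * f p.2 = ∑ i, f i ^ 2 :=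
    sum_nbij' Prod.fst (fun i => (i, i)) (by simp) (by simp)
      (fun p hp => Prod.ext rfl (mem_filter.1 hp).2) (by simp)
      (fun p hp => by rw [← (mem_filter.1 hp).2, sq])
  have hswap : ∑ p : ι × ι with p.2 < p.1, f p.1 * f p.2 =
      ∑ p : ι × ι with p.1 < p.2, f p.1 * f p.2 :=
    sum_nbij' Prod.swap Prod.swap (by simp) (by simp) (by simp) (by simp) (by simp [mul_comm])
  rw [sq, sum_mul_sum, ← Fintype.sum_prod_type', Fintype.sum_congr _ _ hsplit, sum_add_distrib,
    sum_add_distrib, ← sum_filter, ← sum_filter, ← sum_filter, hdiag, hswap]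
  ring

theorem lt_sum_of_sum_pos_of_sum_mul_pos {ι R : Type*} [Fintype ι] [LinearOrder ι]
    [CommRing R] [LinearOrder R] [IsStrictOrderedRing R] {x : ι → R}
    (h₁ : 0 < ∑ i, x i) (h₂ : 0 < ∑ p : ι × ι with p.1 < p.2, x p.1 * x p.2) (i : ι) :
    x i < ∑ j, x j := by
  have hsq : x i ^ 2 < (∑ j, x j) ^ 2 := calc
    x i ^ 2 ≤ ∑ j, x j ^ 2 := single_le_sum (fun j _ => sq_nonneg (x j)) (mem_univ i)
    _ < ∑ j, x j ^ 2 + 2 * ∑ p : ι × ι with p.1 < p.2, x p.1 * x p.2 := by linarith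
    _ = (∑ j, x j) ^ 2 := (sq_sum_eq_sum_sq_add_two_mul_sum_lt x).symm
  exact (le_abs_self _).trans_lt (abs_lt_of_sq_lt_sq hsq h₁.le)

open Matrix in
open scoped ComplexOrder in
theorem Matrix.IsHermitian.posDef_smul_one_sub_iff {n 𝕜 : Type*} [Fintype n] [DecidableEq n]
    [RCLike 𝕜] {A : Matrix n n 𝕜} (hA : A.IsHermitian) (c : ℝ) :
    (c • (1 : Matrix n n 𝕜) - A).PosDef ↔ ∀ i, hA.eigenvalues i < c := by
  have hconj : c • (1 : Matrix n n 𝕜) - A = Unitary.conjStarAlgAut 𝕜 _ hA.eigenvectorUnitary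
      (diagonal fun i => (c : 𝕜) - hA.eigenvalues i) := by
    conv_lhs => rw [hA.spectral_theorem]
    rw [RCLike.real_smul_eq_coe_smul (K := 𝕜),
      ← map_one (Unitary.conjStarAlgAut 𝕜 _ hA.eigenvectorUnitary), ← map_smul, ← map_sub,
      smul_one_eq_diagonal, diagonal_sub]
    rfl
  rw [hconj]
  simp [Unitary.conjStarAlgAut_apply, Unitary.isUnit_coe.posDef_star_right_conjugate_iff]

theorem stmt_9_general (n : ℕ) (A : Matrix (Fin n) (Fin n) ℝ) (hA : A.IsHermitian)
    (S₁ S₂ : ℝ)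
    (hS₁ : S₁ = ∑ i, hA.eigenvalues i)
    (hS₂ : S₂ = ∑ p ∈ Finset.univ.filter (fun p : Fin n × Fin n => p.1 < p.2),
      hA.eigenvalues p.1 * hA.eigenvalues p.2)
    (hS₁pos : 0 < S₁) (hS₂pos : 0 < S₂) :
    (S₁ • (1 : Matrix (Fin n) (Fin n) ℝ) - A).PosDef := by
  subst hS₁ hS₂
  exact (hA.posDef_smul_one_sub_iff _).2 (lt_sum_of_sum_pos_of_sum_mul_pos hS₁pos hS₂pos)

/-- if a symmetric endomorphism `A` of an n-dimensional inner product space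
(`n ≥ 2`) has `S₂(A) > 0` and `S₁(A) > 0` (elementary symmetric functions of its
eigenvalues), then the Newton tensor `P₁ = S₁·Id − A` is positive definite. -/
theorem stmt_9 (n : ℕ) (hn : 2 ≤ n) (A : Matrix (Fin n) (Fin n) ℝ) (hA : A.IsHermitian)
    (S₁ S₂ : ℝ)
    (hS₁ : S₁ = ∑ i, hA.eigenvalues i)
    (hS₂ : S₂ = ∑ p ∈ Finset.univ.filter (fun p : Fin n × Fin n => p.1 < p.2),
      hA.eigenvalues p.1 * hA.eigenvalues p.2)
    (hS₁pos : 0 < S₁) (hS₂pos : 0 < S₂) :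
    (S₁ • (1 : Matrix (Fin n) (Fin n) ℝ) - A).PosDef :=
  stmt_9_general n A hA S₁ S₂ hS₁ hS₂ hS₁pos hS₂pos
end

section
/- In the setting of a two-sided hypersurface f : Mⁿ → I ×_ρ Pⁿ with height function h, angle function Θ, Newton tensors P_k, and 𝓗 = ρ'/ρ, suppose H_k ≠ 0 and set P̂_k = P_k/H_k, L̂_k = trace(P̂_k ∘ hess). Then with σ(t) = ∫_{t₀}^t ρ(s) ds, one has L̂_k σ(h) = c_k ρ(h)(𝓗(h) + Θ·H_{k+1}/H_k), where c_k = (n−k)·binom(n,k). -/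
open RealInnerProductSpace

/-!
Since `ρ' = 𝓗 ρ`, the gradient term `ρ' ⟨g, X⟩ g` of the chain rule cancels the term
`-ρ 𝓗 ⟨X, g⟩ g` of `ρ · hess h`, so `hess σ(h) = ρ 𝓗 · id + ρ Θ · A`. Tracing against `P_k`
and using the Newton-tensor traces gives the formula.
-/

theorem LinearMap.trace_comp_smul_id_add_smul {R M : Type*} [CommRing R] [AddCommGroup M]
    [Module R M] (P A : M →ₗ[R] M) (a b : R) :
    LinearMap.trace R M (P ∘ₗ (a • LinearMap.id + b • A)) =
      a * LinearMap.trace R M P + b * LinearMap.trace R M (P ∘ₗ A) := by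
  simp only [LinearMap.comp_add, LinearMap.comp_smul, LinearMap.comp_id, map_add, map_smul,
    smul_eq_mul]

theorem hessσ_eq_smul_id_add_smul {V : Type*} [NormedAddCommGroup V]
    [InnerProductSpace ℝ V] {g : V} {A hessh hessσ : V →ₗ[ℝ] V} {𝓗 Θ ρ : ℝ}
    (hhess : ∀ X : V, hessh X = 𝓗 • (X - ⟪X, g⟫ • g) + Θ • A X)
    (hchain : ∀ X : V, hessσ X = ρ • hessh X + (𝓗 * ρ * ⟪g, X⟫) • g) :
    hessσ = (ρ * 𝓗) • LinearMap.id + (ρ * Θ) • A := by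
  ext X
  rw [hchain, hhess, real_inner_comm g X]
  simp only [LinearMap.add_apply, LinearMap.smul_apply, LinearMap.id_apply]
  module

theorem stmt_12_general {V : Type*} [NormedAddCommGroup V] [InnerProductSpace ℝ V]
    (g : V) (A Pk hessh hessσ : V →ₗ[ℝ] V)
    (𝓗 Θ ρ ρ' Hk Hk1 ck : ℝ)
    (hHk : Hk ≠ 0) (hρ' : ρ' = 𝓗 * ρ)
    (hhess : ∀ X : V, hessh X = 𝓗 • (X - ⟪X, g⟫ • g) + Θ • A X)
    (htrPk : LinearMap.trace ℝ V Pk = ck * Hk)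
    (htrPkA : LinearMap.trace ℝ V (Pk ∘ₗ A) = ck * Hk1)
    (hchain : ∀ X : V, hessσ X = ρ • hessh X + (ρ' * ⟪g, X⟫) • g) :
    LinearMap.trace ℝ V ((Hk⁻¹ • Pk) ∘ₗ hessσ) = ck * ρ * (𝓗 + Θ * (Hk1 / Hk)) := by
  subst hρ'
  rw [hessσ_eq_smul_id_add_smul hhess hchain, LinearMap.smul_comp, map_smul,
    LinearMap.trace_comp_smul_id_add_smul, htrPk, htrPkA, smul_eq_mul]
  field_simp

/-- pointwise formalization of Lemma on `L̂_k σ(h)`: on the tangent space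
`V` of the hypersurface at a point, with `g = grad h`, shape operator `A`, Newton tensor
`P_k` satisfying `trace P_k = c_k H_k` and `trace (P_k∘A) = c_k H_{k+1}`, the Hessian
formula `hess h(X) = 𝓗(X − ⟨X,g⟩g) + Θ·A X` and the chain rule
`hess σ(h)(X) = ρ·hess h(X) + ρ'⟨g,X⟩g` with `ρ' = 𝓗ρ`, and `H_k ≠ 0`, one gets
`trace ((P_k/H_k) ∘ hess σ(h)) = c_k ρ (𝓗 + Θ·H_{k+1}/H_k)`. -/
theorem stmt_12 {V : Type*} [NormedAddCommGroup V] [InnerProductSpace ℝ V]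
    [FiniteDimensional ℝ V] (n k : ℕ) (hkn : k ≤ n)
    (g : V) (A Pk hessh hessσ : V →ₗ[ℝ] V)
    (𝓗 Θ ρ ρ' Hk Hk1 ck : ℝ)
    (hck : ck = ((n : ℝ) - k) * (n.choose k))
    (hAsymm : A.IsSymmetric) (hPksymm : Pk.IsSymmetric)
    (hHk : Hk ≠ 0) (hρpos : 0 < ρ) (hρ' : ρ' = 𝓗 * ρ)
    (hhess : ∀ X : V, hessh X = 𝓗 • (X - ⟪X, g⟫ • g) + Θ • A X)
    (htrPk : LinearMap.trace ℝ V Pk = ck * Hk)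
    (htrPkA : LinearMap.trace ℝ V (Pk ∘ₗ A) = ck * Hk1)
    (hchain : ∀ X : V, hessσ X = ρ • hessh X + (ρ' * ⟪g, X⟫) • g) :
    LinearMap.trace ℝ V ((Hk⁻¹ • Pk) ∘ₗ hessσ) = ck * ρ * (𝓗 + Θ * (Hk1 / Hk)) :=
  stmt_12_general g A Pk hessh hessσ 𝓗 Θ ρ ρ' Hk Hk1 ck hHk hρ' hhess htrPk htrPkA hchain
end

section
/- Suppose the weak maximum principle for the Laplacian holds on M (for every bounded-above u ∈ C²(M) there is a sequence x_j with u(x_j) → sup u and Δu(x_j) < 1/j), and let h ∈ C²(M) be bounded above with Δh = 𝓗(h)(n − |grad h|²) + nH₁Θ, where 𝓗 : ℝ → ℝ is continuous nondecreasing, H₁ > 0, Θ ≥ 0, and additionally |grad h|(x_j) < 1/j along the sequence. Then 𝓗(sup h) ≤ 0, and hence 𝓗(h) ≤ 0 everywhere on M. -/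
open Filter

/-- angle-function lemma, part ii: suppose `h` is bounded above with
`Δh = 𝓗(h)(n − |grad h|²) + nH₁Θ`, `𝓗` continuous nondecreasing, `H₁ > 0`, `Θ ≥ 0`,
`n ≥ 2`, and suppose (weak maximum principle with gradient control) there is a sequence
`x_j` with `h(x_j) → sup h`, `Δh(x_j) < 1/j` and `|grad h|(x_j) < 1/j`. Then
`𝓗(sup h) ≤ 0` and hence `𝓗(h) ≤ 0` everywhere on `M`. -/
theorem stmt_15 {M : Type*} [Nonempty M] (n : ℕ) (hn : 2 ≤ n)
    (h Δh gradh H₁ Θ : M → ℝ) (𝓗 : ℝ → ℝ)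
    (h𝓗cont : Continuous 𝓗) (h𝓗mono : Monotone 𝓗)
    (hbdd : BddAbove (Set.range h))
    (hgradnn : ∀ x, 0 ≤ gradh x)
    (hΔ : ∀ x, Δh x = 𝓗 (h x) * ((n : ℝ) - (gradh x) ^ 2) + n * H₁ x * Θ x)
    (hH₁ : ∀ x, 0 < H₁ x) (hΘ : ∀ x, 0 ≤ Θ x)
    (xs : ℕ → M)
    (hxs1 : Tendsto (fun j => h (xs j)) atTop (nhds (⨆ y, h y)))
    (hxs2 : ∀ j : ℕ, Δh (xs j) < 1 / (j + 1))
    (hxs3 : ∀ j : ℕ, gradh (xs j) < 1 / (j + 1)) :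
    𝓗 (⨆ y, h y) ≤ 0 ∧ ∀ x, 𝓗 (h x) ≤ 0 := by
  have hinv : Tendsto (fun j : ℕ => 1 / ((j : ℝ) + 1)) atTop (nhds 0) :=
    tendsto_one_div_add_atTop_nhds_zero_nat
  have hg0 : Tendsto (fun j => gradh (xs j)) atTop (nhds 0) :=
    squeeze_zero (fun j => hgradnn _) (fun j => (hxs3 j).le) hinv
  have hL : Tendsto (fun j => 𝓗 (h (xs j)) * ((n : ℝ) - (gradh (xs j)) ^ 2)) atTop
      (nhds (𝓗 (⨆ y, h y) * ((n : ℝ) - 0 ^ 2))) := by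
    exact (((h𝓗cont.tendsto _).comp hxs1).mul
      (tendsto_const_nhds.sub ((hg0.pow 2))))
  have key : 𝓗 (⨆ y, h y) * ((n : ℝ) - 0 ^ 2) ≤ 0 := by
    refine le_of_tendsto_of_tendsto' hL hinv (fun j => ?_)
    have h1 := hΔ (xs j)
    have h2 := hxs2 j
    have h3 : 0 ≤ (n : ℝ) * H₁ (xs j) * Θ (xs j) := by
      have := (hH₁ (xs j)).le
      have := hΘ (xs j)
      positivity
    linarith
  have hn' : (0 : ℝ) < (n : ℝ) - 0 ^ 2 := by
    have : (2 : ℝ) ≤ n := by exact_mod_cast hn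
    linarith
  have hsup : 𝓗 (⨆ y, h y) ≤ 0 := nonpos_of_mul_nonpos_right ?_ hn'
  · exact ⟨hsup, fun x => le_trans (h𝓗mono (le_ciSup hbdd x)) hsup⟩
  · linarith [key]
end

section
/- In the setting of a two-sided hypersurface f : Mⁿ → I ×_ρ Pⁿ, with the operators 𝓛_{k−1} = trace(𝓟_{k−1} ∘ hess) where 𝓟_{k−1} = Σ_{j=0}^{k−1}(−1)^j (c_{k−1}/c_j)𝓗(h)^{k−1−j}Θ^j P_j, the height function satisfies 𝓛_{k−1} h = c_{k−1}(𝓗(h)^k − (−1)^k Θ^k H_k) − 𝓗(h)·⟨𝓟_{k−1} grad h, grad h⟩, given the formulas Δh = 𝓗(h)(n − |grad h|²) + nH₁Θ and L_j h = 𝓗(h)(c_j H_j − ⟨P_j grad h, grad h⟩) + c_j Θ H_{j+1}. -/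
open Finset

/-- with `𝓛_{k−1} = trace(𝓟_{k−1}∘hess)` for
`𝓟_{k−1} = Σ_{j=0}^{k−1}(−1)^j (c_{k−1}/c_j)𝓗(h)^{k−1−j}Θ^j P_j`, and given
`Δh = 𝓗(h)(n − |grad h|²) + nH₁Θ` and
`L_j h = 𝓗(h)(c_j H_j − ⟨P_j grad h, grad h⟩) + c_j Θ H_{j+1}`, one obtains
`𝓛_{k−1} h = c_{k−1}(𝓗(h)^k − (−1)^k Θ^k H_k) − 𝓗(h)·⟨𝓟_{k−1} grad h, grad h⟩`.
Here all quantities are evaluated at a point: `Lh j = L_j h`, `Pg j = ⟨P_j grad h, grad h⟩`,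
`g2 = |grad h|²`, `H j = H_j` (with `H 0 = 1`), `c j = (n−j)·C(n,j)`. -/
theorem stmt_18 (n k : ℕ) (hk : 2 ≤ k) (hkn : k ≤ n)
    (c H Lh Pg : ℕ → ℝ) (𝓗 Θ g2 Δh : ℝ)
    (hc : ∀ j, c j = ((n : ℝ) - j) * (n.choose j))
    (hH0 : H 0 = 1) (hPg0 : Pg 0 = g2)
    (hΔ : Δh = 𝓗 * ((n : ℝ) - g2) + n * H 1 * Θ)
    (hL0 : Lh 0 = Δh)
    (hLj : ∀ j, Lh j = 𝓗 * (c j * H j - Pg j) + c j * Θ * H (j + 1)) :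
    (∑ j ∈ Finset.range k,
        ((-1 : ℝ) ^ j * (c (k - 1) / c j) * 𝓗 ^ (k - 1 - j) * Θ ^ j) * Lh j) =
      c (k - 1) * (𝓗 ^ k - (-1 : ℝ) ^ k * Θ ^ k * H k) -
        𝓗 * ∑ j ∈ Finset.range k,
          ((-1 : ℝ) ^ j * (c (k - 1) / c j) * 𝓗 ^ (k - 1 - j) * Θ ^ j) * Pg j := by

  set f : ℕ → ℝ := fun j => (-1 : ℝ) ^ j * 𝓗 ^ (k - j) * Θ ^ j * H j with hf
  have hcne : ∀ j < k, c j ≠ 0 := by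
    intro j hj
    rw [hc]
    have h1 : (j : ℝ) < n := by exact_mod_cast lt_of_lt_of_le hj hkn
    have h2 : 0 < n.choose j := Nat.choose_pos (le_of_lt (lt_of_lt_of_le hj hkn))
    apply mul_ne_zero
    · linarith
    · exact_mod_cast h2.ne'
  have key : ∀ j ∈ Finset.range k,
      ((-1 : ℝ) ^ j * (c (k - 1) / c j) * 𝓗 ^ (k - 1 - j) * Θ ^ j) * Lh j
        = c (k - 1) * (f j - f (j + 1)) -
          𝓗 * (((-1 : ℝ) ^ j * (c (k - 1) / c j) * 𝓗 ^ (k - 1 - j) * Θ ^ j) * Pg j) := by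
    intro j hj
    rw [Finset.mem_range] at hj
    have h1 : k - j = (k - 1 - j) + 1 := by omega
    have h2 : k - (j + 1) = k - 1 - j := by omega
    rw [hLj j, hf]
    simp only [h1, h2, pow_succ]
    field_simp [hcne j hj]
    ring
  rw [Finset.sum_congr rfl key, Finset.sum_sub_distrib, ← Finset.mul_sum,
    Finset.sum_range_sub' f, ← Finset.mul_sum]
  have hfk : f k = (-1 : ℝ) ^ k * Θ ^ k * H k := by
    simp [hf]
  have hf0 : f 0 = 𝓗 ^ k := by simp [hf, hH0]
  rw [hf0, hfk]
end
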